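/- Let G be a group with elements σ₁, …, σ_{w−1} satisfying the braid relations, γ = σ₁⋯σ_{w−1}, δ_n = σ_n⋯σ₁. Then the 1-bridge braid word δ_b · δ_{w−1}^t (with 1 ≤ b ≤ w−2, t ≥ 1) is conjugate in G to (σ₁σ₂⋯σ_b) · γ^t. -/
import Mathlib

/-- `deltaB σ n = σ n * σ (n-1) * ... * σ 1` (with `deltaB σ 0 = 1`). -/
def deltaB {G : Type*} [Group G] (σ : ℕ → G) (n : ℕ) : G :=
  ((List.range n).map (fun i => σ (n - i))).prod

/-- `gammaB σ n = σ 1 * σ 2 * ... * σ n` (with `gammaB σ 0 = 1`). -/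
def gammaB {G : Type*} [Group G] (σ : ℕ → G) (n : ℕ) : G :=
  ((List.range n).map (fun i => σ (i + 1))).prod

/-- `ascB σ a c = σ a * σ (a+1) * ... * σ (a+c)`. -/
def ascB {G : Type*} [Group G] (σ : ℕ → G) (a c : ℕ) : G :=
  ((List.range (c + 1)).map (fun i => σ (a + i))).prod

section Aux

variable {G : Type*} [Group G]

/-- The Garside-type element `Δ_n`. -/
def DeltaG (σ : ℕ → G) : ℕ → G
  | 0 => 1
  | n + 1 => gammaB σ n * DeltaG σ n

lemma DeltaG_succ (σ : ℕ → G) (n : ℕ) : DeltaG σ (n + 1) = gammaB σ n * DeltaG σ n := rfl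

lemma gammaB_succ (σ : ℕ → G) (n : ℕ) : gammaB σ (n + 1) = gammaB σ n * σ (n + 1) := by
  simp [gammaB, List.range_succ]

lemma deltaB_succ (σ : ℕ → G) (n : ℕ) : deltaB σ (n + 1) = σ (n + 1) * deltaB σ n := by
  simp [deltaB, List.range_succ_eq_map, List.map_map, Function.comp_def, Nat.succ_sub_succ]

lemma ascB_succ (σ : ℕ → G) (a c : ℕ) : ascB σ a (c + 1) = ascB σ a c * σ (a + c + 1) := by
  simp [ascB, List.range_succ, ← add_assoc, mul_assoc]

lemma ascB_zero (σ : ℕ → G) (a : ℕ) : ascB σ a 0 = σ a := by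
  simp [ascB, List.range_succ]

lemma gammaB_eq_asc (σ : ℕ → G) (m : ℕ) : gammaB σ (m + 1) = ascB σ 1 m := by
  simp only [gammaB, ascB]
  congr 1
  apply List.map_congr_left
  intro i _
  congr 1
  omega

lemma conj_list (c : G) (l : List G) :
    c * l.prod * c⁻¹ = (l.map (fun x => c * x * c⁻¹)).prod := by
  induction l with
  | nil => simp
  | cons a l ih =>
    simp only [List.prod_cons, List.map_cons]
    rw [← ih]; group

lemma conj_pow' (c y : G) (t : ℕ) : (c * y * c⁻¹) ^ t = c * y ^ t * c⁻¹ := by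
  induction t with
  | zero => simp
  | succ n ih => rw [pow_succ, pow_succ, ih]; group

variable (σ : ℕ → G) (w : ℕ)
variable (hcomm : ∀ i j, 1 ≤ i → i + 1 < j → j ≤ w - 1 → σ i * σ j = σ j * σ i)
variable (hbraid : ∀ i, 1 ≤ i → i + 1 ≤ w - 1 →
    σ i * σ (i + 1) * σ i = σ (i + 1) * σ i * σ (i + 1))


include hcomm in
lemma comm_gamma (k m : ℕ) (h1 : m + 2 ≤ k) (h2 : k ≤ w - 1) :
    Commute (σ k) (gammaB σ m) := by
  induction m with
  | zero => simpa [gammaB] using Commute.one_right (σ k)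
  | succ n ih =>
    rw [gammaB_succ]
    exact Commute.mul_right (ih (by omega))
      (show Commute (σ (n + 1)) (σ k) from hcomm (n + 1) k (by omega) (by omega) h2).symm

include hcomm in
lemma comm_delta (k m : ℕ) (h1 : m + 2 ≤ k) (h2 : k ≤ w - 1) :
    Commute (σ k) (deltaB σ m) := by
  induction m with
  | zero => simpa [deltaB] using Commute.one_right (σ k)
  | succ n ih =>
    rw [deltaB_succ]
    exact Commute.mul_right
      (show Commute (σ (n + 1)) (σ k) from hcomm (n + 1) k (by omega) (by omega) h2).symm
      (ih (by omega))

include hcomm in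
lemma comm_Delta (k m : ℕ) (h1 : m + 1 ≤ k) (h2 : k ≤ w - 1) :
    Commute (σ k) (DeltaG σ m) := by
  induction m with
  | zero => simpa [DeltaG] using Commute.one_right (σ k)
  | succ n ih =>
    rw [DeltaG_succ]
    exact Commute.mul_right (comm_gamma σ w hcomm k n (by omega) h2) (ih (by omega))

include hcomm hbraid in
lemma gamma_shift (n i : ℕ) (h1 : 1 ≤ i) (h2 : i + 1 ≤ n) (h3 : n ≤ w - 1) :
    gammaB σ n * σ i = σ (i + 1) * gammaB σ n := by
  induction n, h2 using Nat.le_induction with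
  | base =>
    obtain ⟨j, rfl⟩ : ∃ j, i = j + 1 := ⟨i - 1, by omega⟩
    have hb : σ (j + 1) * (σ (j + 2) * σ (j + 1)) = σ (j + 2) * (σ (j + 1) * σ (j + 2)) := by
      have := hbraid (j + 1) (by omega) (by omega)
      simpa [mul_assoc] using this
    have hc : gammaB σ j * σ (j + 2) = σ (j + 2) * gammaB σ j :=
      (comm_gamma σ w hcomm (j + 2) j (by omega) (by omega)).symm
    show gammaB σ (j + 2) * σ (j + 1) = σ (j + 2) * gammaB σ (j + 2)
    rw [show gammaB σ (j + 2) = gammaB σ j * σ (j + 1) * σ (j + 2) by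
      rw [gammaB_succ σ (j + 1), gammaB_succ σ j]]
    simp only [mul_assoc]
    rw [hb, ← mul_assoc, hc, mul_assoc]
  | succ n hn ih =>
    have hcn : σ (n + 1) * σ i = σ i * σ (n + 1) :=
      (hcomm i (n + 1) h1 (by omega) (by omega)).symm
    rw [gammaB_succ, mul_assoc, hcn, ← mul_assoc, ih (by omega), mul_assoc]

include hcomm hbraid in
lemma delta_shift (n i : ℕ) (h1 : 1 ≤ i) (h2 : i + 1 ≤ n) (h3 : n ≤ w - 1) :
    σ i * deltaB σ n = deltaB σ n * σ (i + 1) := by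
  induction n, h2 using Nat.le_induction with
  | base =>
    obtain ⟨j, rfl⟩ : ∃ j, i = j + 1 := ⟨i - 1, by omega⟩
    have hb : σ (j + 1) * (σ (j + 2) * σ (j + 1)) = σ (j + 2) * (σ (j + 1) * σ (j + 2)) := by
      have := hbraid (j + 1) (by omega) (by omega)
      simpa [mul_assoc] using this
    have hc : σ (j + 2) * deltaB σ j = deltaB σ j * σ (j + 2) :=
      comm_delta σ w hcomm (j + 2) j (by omega) (by omega)
    have hb' : σ (j + 1) * σ (j + 2) * σ (j + 1) = σ (j + 2) * σ (j + 1) * σ (j + 2) :=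
      hbraid (j + 1) (by omega) (by omega)
    show σ (j + 1) * deltaB σ (j + 2) = deltaB σ (j + 2) * σ (j + 2)
    rw [show deltaB σ (j + 2) = σ (j + 2) * (σ (j + 1) * deltaB σ j) by
      rw [deltaB_succ σ (j + 1), deltaB_succ σ j]]
    simp only [← mul_assoc]
    rw [hb', mul_assoc (σ (j + 2) * σ (j + 1)), hc, ← mul_assoc]
  | succ n hn ih =>
    have hcn : σ i * σ (n + 1) = σ (n + 1) * σ i :=
      hcomm i (n + 1) h1 (by omega) (by omega)
    rw [deltaB_succ, ← mul_assoc, hcn, mul_assoc, ih (by omega), ← mul_assoc]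

include hcomm hbraid in
lemma gd (n : ℕ) (h : n ≤ w - 1) :
    gammaB σ n * DeltaG σ n = DeltaG σ n * deltaB σ n := by
  induction n with
  | zero => simp [gammaB, DeltaG, deltaB]
  | succ n ih =>
    have hc : σ (n + 1) * DeltaG σ n = DeltaG σ n * σ (n + 1) :=
      comm_Delta σ w hcomm (n + 1) n (by omega) h
    calc gammaB σ (n + 1) * DeltaG σ (n + 1)
        = gammaB σ n * (σ (n + 1) * (gammaB σ n * DeltaG σ n)) := by
          rw [gammaB_succ, DeltaG_succ]; group
      _ = gammaB σ n * (σ (n + 1) * (DeltaG σ n * deltaB σ n)) := by rw [ih (by omega)]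
      _ = gammaB σ n * (DeltaG σ n * (σ (n + 1) * deltaB σ n)) := by
          rw [← mul_assoc (σ (n + 1)), hc, mul_assoc]
      _ = DeltaG σ (n + 1) * deltaB σ (n + 1) := by
          rw [DeltaG_succ, deltaB_succ]; group

include hcomm hbraid in
lemma DeltaG_shift (n : ℕ) (hn : n ≤ w) :
    ∀ i, 1 ≤ i → i + 1 ≤ n → DeltaG σ n * σ i = σ (n - i) * DeltaG σ n := by
  induction n with
  | zero => intro i h1 h2; omega
  | succ n ih =>
    intro i h1 h2
    rcases lt_or_eq_of_le (show i ≤ n by omega) with hlt | rfl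
    · -- i + 1 ≤ n
      have e1 : n + 1 - i = n - i + 1 := by omega
      rw [e1, DeltaG_succ, mul_assoc, ih (by omega) i h1 (by omega), ← mul_assoc,
        gamma_shift σ w hcomm hbraid n (n - i) (by omega) (by omega) (by omega), mul_assoc]
    · -- i = n
      rcases Nat.lt_or_ge i 2 with hs | hs
      · -- i = n = 1
        have hi1 : i = 1 := by omega
        subst hi1
        have e : 1 + 1 - 1 = 1 := rfl
        rw [e, DeltaG_succ]
        show gammaB σ 1 * DeltaG σ 1 * σ 1 = σ 1 * (gammaB σ 1 * DeltaG σ 1)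
        simp [gammaB, DeltaG, List.range_succ, mul_assoc]
      · -- i = n ≥ 2
        have e1 : i + 1 - i = 1 := by omega
        have hds : σ (i - 1) * deltaB σ i = deltaB σ i * σ i := by
          have := delta_shift σ w hcomm hbraid i (i - 1) (by omega) (by omega) (by omega)
          rwa [show i - 1 + 1 = i by omega] at this
        have hih : DeltaG σ i * σ (i - 1) = σ 1 * DeltaG σ i := by
          have := ih (by omega) (i - 1) (by omega) (by omega)
          rwa [show i - (i - 1) = 1 by omega] at this
        rw [e1]
        calc DeltaG σ (i + 1) * σ i
            = DeltaG σ i * deltaB σ i * σ i := by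
              rw [DeltaG_succ, gd σ w hcomm hbraid i (by omega)]
          _ = DeltaG σ i * (σ (i - 1) * deltaB σ i) := by rw [mul_assoc, ← hds]
          _ = σ 1 * DeltaG σ i * deltaB σ i := by rw [← mul_assoc, hih, mul_assoc]
          _ = σ 1 * DeltaG σ (i + 1) := by
              rw [DeltaG_succ, mul_assoc, ← gd σ w hcomm hbraid i (by omega)]

include hcomm hbraid in
lemma gamma_asc (a c : ℕ) (h1 : 1 ≤ a) (h2 : a + c + 1 ≤ w - 1) :
    gammaB σ (w - 1) * ascB σ a c = ascB σ (a + 1) c * gammaB σ (w - 1) := by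
  induction c with
  | zero =>
    rw [ascB_zero, ascB_zero]
    exact gamma_shift σ w hcomm hbraid (w - 1) a h1 (by omega) (le_refl _)
  | succ c ih =>
    have e : a + 1 + c + 1 = a + c + 1 + 1 := by omega
    rw [ascB_succ, ascB_succ, e, ← mul_assoc, ih (by omega), mul_assoc,
      gamma_shift σ w hcomm hbraid (w - 1) (a + c + 1) (by omega) (by omega) (le_refl _),
      ← mul_assoc]

include hcomm hbraid in
lemma gamma_pow_asc (k a c : ℕ) (h1 : 1 ≤ a) (h2 : a + c + k ≤ w - 1) :
    gammaB σ (w - 1) ^ k * ascB σ a c = ascB σ (a + k) c * gammaB σ (w - 1) ^ k := by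
  induction k with
  | zero => simp
  | succ k ih =>
    have e : a + k + 1 = a + (k + 1) := by omega
    rw [pow_succ', mul_assoc, ih (by omega), ← mul_assoc,
      gamma_asc σ w hcomm hbraid (a + k) c (by omega) (by omega), e, mul_assoc, ← pow_succ']

end Aux

theorem stmt15 {G : Type*} [Group G] (σ : ℕ → G) (w b t : ℕ)
    (hb1 : 1 ≤ b) (hb2 : b ≤ w - 2) (ht : 1 ≤ t)
    (hcomm : ∀ i j, 1 ≤ i → i + 1 < j → j ≤ w - 1 → σ i * σ j = σ j * σ i)
    (hbraid : ∀ i, 1 ≤ i → i + 1 ≤ w - 1 →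
      σ i * σ (i + 1) * σ i = σ (i + 1) * σ i * σ (i + 1)) :
    IsConj (deltaB σ b * (deltaB σ (w - 1)) ^ t)
      (gammaB σ b * (gammaB σ (w - 1)) ^ t) := by
  have hw3 : 3 ≤ w := by omega
  set Δ := DeltaG σ w with hΔdef
  have hconj : ∀ j, 1 ≤ j → j ≤ w - 1 → Δ * σ j * Δ⁻¹ = σ (w - j) := by
    intro j h1 h2
    rw [hΔdef, DeltaG_shift σ w hcomm hbraid w (le_refl w) j h1 (by omega)]
    group
  have A1 : Δ * deltaB σ b * Δ⁻¹ = ascB σ (w - b) (b - 1) := by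
    rw [deltaB, conj_list, ascB, List.map_map, show b - 1 + 1 = b by omega]
    congr 1
    apply List.map_congr_left
    intro i hi
    rw [List.mem_range] at hi
    show Δ * σ (b - i) * Δ⁻¹ = σ (w - b + i)
    rw [hconj (b - i) (by omega) (by omega)]
    congr 1
    omega
  have A2 : Δ * deltaB σ (w - 1) * Δ⁻¹ = gammaB σ (w - 1) := by
    rw [deltaB, conj_list, gammaB, List.map_map]
    congr 1
    apply List.map_congr_left
    intro i hi
    rw [List.mem_range] at hi
    show Δ * σ (w - 1 - i) * Δ⁻¹ = σ (i + 1)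
    rw [hconj (w - 1 - i) (by omega) (by omega)]
    congr 1
    omega
  have c1 : IsConj (deltaB σ b * (deltaB σ (w - 1)) ^ t)
      (ascB σ (w - b) (b - 1) * (gammaB σ (w - 1)) ^ t) := by
    rw [isConj_iff]
    refine ⟨Δ, ?_⟩
    calc Δ * (deltaB σ b * (deltaB σ (w - 1)) ^ t) * Δ⁻¹
        = (Δ * deltaB σ b * Δ⁻¹) * (Δ * deltaB σ (w - 1) * Δ⁻¹) ^ t := by
          rw [conj_pow']; group
      _ = ascB σ (w - b) (b - 1) * (gammaB σ (w - 1)) ^ t := by rw [A1, A2]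
  have c2 : IsConj (gammaB σ b * (gammaB σ (w - 1)) ^ t)
      (ascB σ (w - b) (b - 1) * (gammaB σ (w - 1)) ^ t) := by
    rw [isConj_iff]
    set γ := gammaB σ (w - 1) with hγ
    set k := w - 1 - b with hk
    refine ⟨γ ^ k, ?_⟩
    have key : γ ^ k * ascB σ 1 (b - 1) = ascB σ (w - b) (b - 1) * γ ^ k := by
      have := gamma_pow_asc σ w hcomm hbraid k 1 (b - 1) (le_refl _) (by omega)
      rwa [show 1 + k = w - b by omega] at this
    have hgb : gammaB σ b = ascB σ 1 (b - 1) := by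
      have h := gammaB_eq_asc σ (b - 1)
      rwa [show b - 1 + 1 = b by omega] at h
    have hpow : γ ^ k * γ ^ t * (γ ^ k)⁻¹ = γ ^ t := by
      rw [pow_mul_comm, mul_inv_cancel_right]
    calc γ ^ k * (gammaB σ b * γ ^ t) * (γ ^ k)⁻¹
        = (γ ^ k * ascB σ 1 (b - 1)) * (γ ^ t * (γ ^ k)⁻¹) := by rw [hgb]; group
      _ = (ascB σ (w - b) (b - 1) * γ ^ k) * (γ ^ t * (γ ^ k)⁻¹) := by rw [key]
      _ = ascB σ (w - b) (b - 1) * (γ ^ k * γ ^ t * (γ ^ k)⁻¹) := by group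
      _ = ascB σ (w - b) (b - 1) * γ ^ t := by rw [hpow]
  exact c1.trans c2.symm
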